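/- Let ε₀, δ ∈ (0,1), let Ĉ ⊆ Σ̂^m be a code of block length m in which any two distinct codewords differ in at least δ·m coordinates, and let SC = (sc₁,…,sc_m) be an ε₀-synchronization circle of length m over an alphabet Σ_SC. Define the code C = { ((ĉ₁, sc₁), …, (ĉ_m, sc_m)) : (ĉ₁,…,ĉ_m) ∈ Ĉ } over the alphabet Σ = Σ̂ × Σ_SC, and let S be the concatenation of N pairwise distinct codewords of C. Then S is an ε₁-synchronization circle, where ε₁ = 10·(1 − δ·(1−ε₀)/(1+ε₀)). -/

import Mathlib

/-- The length of a longest common subsequence of two strings (lists). -/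
noncomputable def lcsLen {α : Type*} (S T : List α) : ℕ :=
  sSup {n | ∃ U : List α, U.length = n ∧ U.Sublist S ∧ U.Sublist T}

/-- The edit distance (insertions/deletions) between two strings, via
`ED(S,T) = |S| + |T| - 2·LCS(S,T)`. -/
noncomputable def editDistance {α : Type*} (S T : List α) : ℕ :=
  S.length + T.length - 2 * lcsLen S T

/-- `strSlice S a b` is the substring `S[a, b)` of `S` (1-indexed, `b` excluded). -/
def strSlice {α : Type*} (S : List α) (a b : ℕ) : List α :=
  (S.drop (a - 1)).take (b - a)

/-- `islice f a b` is the substring `f[a, b)` of the infinite string `f`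
(1-indexed, `b` excluded). -/
def islice {α : Type*} (f : ℕ → α) (a b : ℕ) : List α :=
  (List.range (b - a)).map fun t => f (a + t)

/-- `S` is an ε-synchronization string: for all `1 ≤ i < j < k ≤ |S| + 1`,
`ED(S[i,j), S[j,k)) > (1-ε)(k-i)`. -/
def IsSyncString {α : Type*} (ε : ℝ) (S : List α) : Prop :=
  ∀ i j k : ℕ, 1 ≤ i → i < j → j < k → k ≤ S.length + 1 →
    (1 - ε) * ((k : ℝ) - (i : ℝ)) < (editDistance (strSlice S i j) (strSlice S j k) : ℝ)

/-- `S` is an ε-synchronization circle: every cyclic rotation of `S` is an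
ε-synchronization string. -/
def IsSyncCircle {α : Type*} (ε : ℝ) (S : List α) : Prop :=
  ∀ i : ℕ, 1 ≤ i → i ≤ S.length → IsSyncString ε (S.rotate (i - 1))

/-- An infinite ε-synchronization string (1-indexed). -/
def IsInfSyncString {α : Type*} (ε : ℝ) (f : ℕ → α) : Prop :=
  ∀ i j k : ℕ, 1 ≤ i → i < j → j < k →
    (1 - ε) * ((k : ℝ) - (i : ℝ)) < (editDistance (islice f i j) (islice f j k) : ℝ)

/-- `S` is a `c`-long-distance ε-synchronization string: for all
`1 ≤ i < j ≤ i' < j' ≤ |S| + 1` with `l = (j-i)+(j'-i')`, if the two intervals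
are adjacent (`i' = j`) or `l > c · log |S|`, then
`ED(S[i,j), S[i',j')) > (1-ε)·l`. -/
noncomputable def IsLongDistSyncString {α : Type*} (c ε : ℝ) (S : List α) : Prop :=
  ∀ i j i' j' : ℕ, 1 ≤ i → i < j → j ≤ i' → i' < j' → j' ≤ S.length + 1 →
    (i' = j ∨ c * Real.log (S.length : ℝ) < ((j : ℝ) - i) + ((j' : ℝ) - i')) →
    (1 - ε) * (((j : ℝ) - i) + ((j' : ℝ) - i')) <
      (editDistance (strSlice S i j) (strSlice S i' j') : ℝ)

/-- An infinite weak ε-synchronization string: for all `1 ≤ i < j < k`,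
`ED(S[i,j), S[j,k)) ≥ ⌊(1-ε)(k-i)⌋`. -/
def IsInfWeakSyncString {α : Type*} (ε : ℝ) (f : ℕ → α) : Prop :=
  ∀ i j k : ℕ, 1 ≤ i → i < j → j < k →
    ((⌊(1 - ε) * ((k : ℝ) - (i : ℝ))⌋ : ℤ) : ℝ) ≤
      (editDistance (islice f i j) (islice f j k) : ℝ)


/-!
Let `F` be the periodic extension of the concatenation and `c = 1 - δ (1 - ε₀) / (1 + ε₀)`; it
suffices that every window `F[x, y) F[y, z)` of length `L = z - x ≤ N m` has `LCS < 5 c L`. This is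
trivial when `c > 1/10`. When `L ≤ m`, the second coordinates alone form a window of the
synchronization circle `sc`, whose LCS is below `ε₀ L / 2 ≤ c L / 2`. When `L > m`, view a longest
common subsequence as a monotone matching of positions and sort its pairs by the blocks of length
`m` containing their two ends. Within one pair of blocks, the pairs at equal offsets are agreements
of two distinct codewords (at most `(1 - δ) m` of them), and the others form a self-matching of
`sc` without fixed points (at most `2 ε₀ m`). A monotone matching meets at most `L / m + 3` pairs of
blocks, one for each value of the sum of the two block indices, so
`LCS ≤ ((1 - δ) + 2 ε₀) (L + 3 m)`, which is below `5 c L` when `c ≤ 1/10`.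
-/

open Finset

section LCS

variable {α β : Type*}

theorem exists_sublist_length_eq_lcsLen (A B : List α) :
    ∃ U : List α, U.length = lcsLen A B ∧ U.Sublist A ∧ U.Sublist B := by
  refine Nat.sSup_mem (s := {n | ∃ U : List α, U.length = n ∧ U.Sublist A ∧ U.Sublist B})
    ⟨0, [], rfl, List.nil_sublist A, List.nil_sublist B⟩ ⟨A.length, ?_⟩
  rintro n ⟨U, rfl, hA, -⟩
  exact hA.length_le

theorem length_le_lcsLen {A B U : List α} (hA : U.Sublist A) (hB : U.Sublist B) :
    U.length ≤ lcsLen A B := by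
  refine le_csSup ⟨A.length, ?_⟩ ⟨U, rfl, hA, hB⟩
  rintro n ⟨U, rfl, hA, -⟩
  exact hA.length_le

theorem two_mul_lcsLen_le (A B : List α) : 2 * lcsLen A B ≤ A.length + B.length := by
  obtain ⟨U, hU, hA, hB⟩ := exists_sublist_length_eq_lcsLen A B
  have := hA.length_le
  have := hB.length_le
  omega

theorem cast_editDistance (A B : List α) :
    (editDistance A B : ℝ) = A.length + B.length - 2 * lcsLen A B := by
  rw [editDistance, Nat.cast_sub (two_mul_lcsLen_le A B)]
  push_cast
  ring

theorem lcsLen_le_lcsLen_map (f : α → β) (A B : List α) :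
    lcsLen A B ≤ lcsLen (A.map f) (B.map f) := by
  obtain ⟨U, hU, hA, hB⟩ := exists_sublist_length_eq_lcsLen A B
  simpa [hU] using length_le_lcsLen (hA.map f) (hB.map f)

end LCS

section Slices

variable {α β : Type*}

@[simp]
theorem length_islice (f : ℕ → α) (a b : ℕ) : (islice f a b).length = b - a := by
  simp [islice]

theorem map_islice (g : α → β) (f : ℕ → α) (a b : ℕ) :
    (islice f a b).map g = islice (g ∘ f) a b := by
  simp [islice, Function.comp_def]

theorem islice_append {f : ℕ → α} {a b c : ℕ} (hab : a ≤ b) (hbc : b ≤ c) :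
    islice f a b ++ islice f b c = islice f a c := by
  obtain ⟨k, rfl⟩ := Nat.exists_eq_add_of_le hab
  obtain ⟨l, rfl⟩ := Nat.exists_eq_add_of_le hbc
  simp [islice, List.range_add, Function.comp_def, Nat.add_assoc, Nat.add_sub_add_left]

theorem islice_succ {f : ℕ → α} {a b : ℕ} (hab : a ≤ b) :
    islice f a (b + 1) = islice f a b ++ [f b] := by
  rw [← islice_append hab b.le_succ]
  simp [islice]

theorem concat_sublist_islice {U : List α} {f : ℕ → α} {x p y : ℕ}
    (hU : U.Sublist (islice f x p)) (hxp : x ≤ p) (hpy : p < y) :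
    (U ++ [f p]).Sublist (islice f x y) := by
  rw [← islice_append (Nat.le_succ_of_le hxp) hpy, islice_succ hxp]
  exact (hU.append (List.Sublist.refl _)).trans (List.sublist_append_left _ _)

theorem strSlice_eq_islice {S : List α} {f : ℕ → α}
    (hf : ∀ q (hq : q < S.length), S[q] = f q) {a b : ℕ} (ha : 1 ≤ a) (hb : b ≤ S.length + 1) :
    strSlice S a b = islice f (a - 1) (b - 1) := by
  apply List.ext_getElem
  · simp only [strSlice, List.length_take, List.length_drop, length_islice]
    omega
  · intro t h1 h2
    simp only [strSlice, List.getElem_take, List.getElem_drop, islice, List.getElem_map,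
      List.getElem_range]
    rw [hf]

end Slices

def IsMonotoneMatching (M : Finset (ℕ × ℕ)) : Prop :=
  ∀ a ∈ M, ∀ b ∈ M, a.1 < b.1 ↔ a.2 < b.2

namespace IsMonotoneMatching

variable {M M' : Finset (ℕ × ℕ)}

theorem mono (hM : IsMonotoneMatching M) (h : M' ⊆ M) : IsMonotoneMatching M' :=
  fun a ha b hb => hM a (h ha) b (h hb)

theorem snd_le_snd (hM : IsMonotoneMatching M) {a b : ℕ × ℕ} (ha : a ∈ M) (hb : b ∈ M)
    (h : a.1 ≤ b.1) : a.2 ≤ b.2 :=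
  not_lt.1 fun h' => (not_lt.2 h) ((hM b hb a ha).2 h')

theorem eq_of_fst_eq (hM : IsMonotoneMatching M) {a b : ℕ × ℕ} (ha : a ∈ M) (hb : b ∈ M)
    (h : a.1 = b.1) : a = b :=
  Prod.ext h (le_antisymm (hM.snd_le_snd ha hb h.le) (hM.snd_le_snd hb ha h.ge))

theorem image_swap (hM : IsMonotoneMatching M) : IsMonotoneMatching (M.image Prod.swap) := by
  simp only [IsMonotoneMatching, mem_image]
  rintro _ ⟨a, ha, rfl⟩ _ ⟨b, hb, rfl⟩
  exact (hM a ha b hb).symm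

theorem card_le_lcsLen {α : Type*} {f g : ℕ → α} {x x' : ℕ} (hM : IsMonotoneMatching M) :
    ∀ {y y' : ℕ}, (∀ a ∈ M, x ≤ a.1 ∧ a.1 < y ∧ x' ≤ a.2 ∧ a.2 < y' ∧ f a.1 = g a.2) →
      M.card ≤ lcsLen (islice f x y) (islice g x' y') := by
  induction M using Finset.strongInduction with
  | H M ih =>
    intro y y' hsub
    rcases M.eq_empty_or_nonempty with rfl | hne
    · simp
    obtain ⟨c, hc, hmax⟩ := M.exists_max_image Prod.fst hne
    obtain ⟨hxc, hcy, hxc', hcy', hfc⟩ := hsub c hc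
    have hrest : ∀ a ∈ M.erase c,
        x ≤ a.1 ∧ a.1 < c.1 ∧ x' ≤ a.2 ∧ a.2 < c.2 ∧ f a.1 = g a.2 := by
      intro a ha
      obtain ⟨hac, ha⟩ := mem_erase.1 ha
      have hlt : a.1 < c.1 := lt_of_le_of_ne (hmax a ha) fun h => hac (hM.eq_of_fst_eq ha hc h)
      obtain ⟨h1, -, h3, -, h5⟩ := hsub a ha
      exact ⟨h1, hlt, h3, (hM a ha c hc).1 hlt, h5⟩
    obtain ⟨U, hU, hUf, hUg⟩ :=
      exists_sublist_length_eq_lcsLen (islice f x c.1) (islice g x' c.2)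
    have hg := concat_sublist_islice hUg hxc' hcy'
    rw [← hfc] at hg
    calc M.card = (M.erase c).card + 1 := (card_erase_add_one hc).symm
      _ ≤ U.length + 1 := by
        rw [hU]
        exact Nat.succ_le_succ (ih _ (erase_ssubset hc) (hM.mono (erase_subset c M)) hrest)
      _ ≤ _ := by simpa using length_le_lcsLen (concat_sublist_islice hUf hxc hcy) hg

end IsMonotoneMatching

theorem exists_monotoneMatching_card_eq_lcsLen {α : Type*} (f g : ℕ → α) (x y x' y' : ℕ) :
    ∃ M : Finset (ℕ × ℕ), IsMonotoneMatching M ∧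
      (∀ a ∈ M, x ≤ a.1 ∧ a.1 < y ∧ x' ≤ a.2 ∧ a.2 < y' ∧ f a.1 = g a.2) ∧
      M.card = lcsLen (islice f x y) (islice g x' y') := by
  obtain ⟨U, hU, hUf, hUg⟩ := exists_sublist_length_eq_lcsLen (islice f x y) (islice g x' y')
  obtain ⟨φ, hφ⟩ := List.sublist_iff_exists_fin_orderEmbedding_get_eq.1 hUf
  obtain ⟨ψ, hψ⟩ := List.sublist_iff_exists_fin_orderEmbedding_get_eq.1 hUg
  set e : Fin U.length → ℕ × ℕ := fun t => (x + φ t, x' + ψ t)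
  have he : Function.Injective e := fun s t h =>
    φ.injective (Fin.ext (Nat.add_left_cancel (congrArg Prod.fst h)))
  refine ⟨univ.image e, ?_, ?_, ?_⟩
  rotate_left 2
  · rw [card_image_of_injective _ he, card_univ, Fintype.card_fin, hU]
  · simp only [IsMonotoneMatching, mem_image, mem_univ, true_and]
    rintro _ ⟨s, rfl⟩ _ ⟨t, rfl⟩
    simp only [e, Nat.add_lt_add_iff_left, ← Fin.lt_def, φ.lt_iff_lt, ψ.lt_iff_lt]
  · simp only [mem_image, mem_univ, true_and]
    rintro _ ⟨t, rfl⟩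
    have h1 := (φ t).isLt
    have h2 := (ψ t).isLt
    have h3 := (hφ t).symm.trans (hψ t)
    simp only [islice, List.length_map, List.length_range, List.get_eq_getElem, List.getElem_map,
      List.getElem_range] at h1 h2 h3
    exact ⟨by simp [e], by simp [e]; omega, by simp [e], by simp [e]; omega, h3⟩

section Windows

variable {α : Type*}

def IsSyncOnWindows (ε : ℝ) (n : ℕ) (f : ℕ → α) : Prop :=
  ∀ x y z : ℕ, x < y → y < z → z ≤ x + n →
    (1 - ε) * ((z : ℝ) - x) < editDistance (islice f x y) (islice f y z)

theorem islice_add_right (f : ℕ → α) (a b d : ℕ) :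
    islice f (a + d) (b + d) = islice (fun q => f (q + d)) a b := by
  simp only [islice, Nat.add_sub_add_right]
  congr 1
  funext t
  rw [Nat.add_right_comm]

theorem islice_add_mul {f : ℕ → α} {n : ℕ} (hper : ∀ q, f (q % n) = f q) (a b u : ℕ) :
    islice f (a + n * u) (b + n * u) = islice f a b := by
  rw [islice_add_right]
  congr 1
  funext q
  rw [← hper, Nat.add_mul_mod_self_left, hper]

theorem isSyncString_rotate_iff {ε : ℝ} {S : List α} {f : ℕ → α}
    (hf : ∀ q (hq : q < S.length), S[q] = f q) (hper : ∀ q, f (q % S.length) = f q) (s : ℕ) :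
    IsSyncString ε (S.rotate s) ↔ ∀ i j k : ℕ, 1 ≤ i → i < j → j < k → k ≤ S.length + 1 →
      (1 - ε) * ((k : ℝ) - i) <
        editDistance (islice f (i - 1 + s) (j - 1 + s)) (islice f (j - 1 + s) (k - 1 + s)) := by
  have hrot (q : ℕ) (hq : q < (S.rotate s).length) : (S.rotate s)[q] = f (q + s) := by
    rw [List.getElem_rotate, hf, hper]
  unfold IsSyncString
  simp only [List.length_rotate]
  refine forall₄_congr fun i j k hi => imp_congr_right fun hij => imp_congr_right fun hjk =>
    imp_congr_right fun hk => ?_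
  rw [strSlice_eq_islice hrot hi (by simpa using hk.trans' hjk.le),
    strSlice_eq_islice hrot (by omega) (by simpa using hk), islice_add_right, islice_add_right]

theorem isSyncCircle_iff_isSyncOnWindows {ε : ℝ} {S : List α} {f : ℕ → α}
    (hf : ∀ q (hq : q < S.length), S[q] = f q) (hper : ∀ q, f (q % S.length) = f q) :
    IsSyncCircle ε S ↔ IsSyncOnWindows ε S.length f := by
  set n := S.length
  constructor
  · intro hS x y z hxy hyz hzx
    have hn : 0 < n := by omega
    set r := x % n
    have hx : r + n * (x / n) = x := Nat.mod_add_div x n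
    have key := (isSyncString_rotate_iff hf hper r).1 (hS (r + 1) (by omega) (Nat.mod_lt x hn))
      1 (y - x + 1) (z - x + 1) le_rfl (by omega) (by omega) (by omega)
    simp only [Nat.add_sub_cancel, Nat.sub_self, Nat.zero_add] at key
    rw [← islice_add_mul hper _ _ (x / n), ← islice_add_mul hper (y - x + r) _ (x / n),
      hx, show y - x + r + n * (x / n) = y by omega,
      show z - x + r + n * (x / n) = z by omega] at key
    convert key using 2
    push_cast [Nat.cast_sub (hxy.trans hyz).le]
    ring
  · intro hW i hi hin
    refine (isSyncString_rotate_iff hf hper (i - 1)).2 fun a b c ha hab hbc hc => ?_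
    have := hW (a - 1 + (i - 1)) (b - 1 + (i - 1)) (c - 1 + (i - 1)) (by omega) (by omega)
      (by omega)
    convert this using 2
    push_cast [Nat.cast_sub ha, Nat.cast_sub (by omega : 1 ≤ c)]
    ring

namespace IsSyncOnWindows

variable {ε : ℝ} {n : ℕ} {f : ℕ → α}

theorem lcsLen_lt (hf : IsSyncOnWindows ε n f) {x y z : ℕ} (hxy : x < y) (hyz : y < z)
    (hzx : z ≤ x + n) : (lcsLen (islice f x y) (islice f y z) : ℝ) < ε / 2 * ((z : ℝ) - x) := by
  have h := hf x y z hxy hyz hzx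
  rw [cast_editDistance, length_islice, length_islice, Nat.cast_sub hxy.le,
    Nat.cast_sub hyz.le] at h
  linarith

theorem card_le_of_fst_lt_snd (hf : IsSyncOnWindows ε n f) (hε : 0 ≤ ε)
    (M : Finset (ℕ × ℕ)) (hM : IsMonotoneMatching M) (p₀ q₀ : ℕ)
    (hMf : ∀ a ∈ M, p₀ ≤ a.1 ∧ q₀ ≤ a.2 ∧ a.1 < a.2 ∧ a.2 < n ∧ f a.1 = f a.2)
    (hpq : p₀ + q₀ ≤ 2 * n) :
    (M.card : ℝ) ≤ ε / 2 * (2 * n - p₀ - q₀) := by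
  induction M using Finset.strongInduction generalizing p₀ q₀ with
  | H M ih =>
    rcases M.eq_empty_or_nonempty with rfl | hne
    · have : (p₀ : ℝ) + q₀ ≤ 2 * n := by exact_mod_cast hpq
      simp only [card_empty, Nat.cast_zero]
      nlinarith
    -- With `a₀` the first pair, the pairs `G` starting before `a₀.2` match the adjacent windows
    -- `f[a₀.1, a₀.2)` and `f[a₀.2, g.2 + 1)` (`g` the last of them), so there are fewer than
    -- `ε / 2` times that length of them; all other pairs lie beyond both windows.
    obtain ⟨a₀, ha₀, hmin⟩ := M.exists_min_image Prod.fst hne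
    obtain ⟨hp₀, hq₀, ha₀lt, ha₀n, -⟩ := hMf a₀ ha₀
    set G := M.filter fun a => a.1 < a₀.2
    set R := M.filter fun a => ¬ a.1 < a₀.2
    have ha₀G : a₀ ∈ G := mem_filter.2 ⟨ha₀, ha₀lt⟩
    obtain ⟨g, hgG, hmax⟩ := G.exists_max_image Prod.snd ⟨a₀, ha₀G⟩
    have hg₂ := hmax a₀ ha₀G
    obtain ⟨hgM, hg₁⟩ := mem_filter.1 hgG
    have hgn := (hMf g hgM).2.2.2.1
    have hG : (G.card : ℝ) < ε / 2 * ((g.2 + 1 : ℕ) - a₀.1) := by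
      refine lt_of_le_of_lt (Nat.cast_le.2 ?_) (hf.lcsLen_lt ha₀lt (by omega) (by omega))
      refine (hM.mono (filter_subset _ M)).card_le_lcsLen fun a ha => ?_
      obtain ⟨haM, ha₁⟩ := mem_filter.1 ha
      exact ⟨hmin a haM, ha₁, hM.snd_le_snd ha₀ haM (hmin a haM), Nat.lt_succ_of_le (hmax a ha),
        (hMf a haM).2.2.2.2⟩
    have hR : (R.card : ℝ) ≤ ε / 2 * (2 * n - a₀.2 - (g.2 + 1 : ℕ)) := by
      refine ih R ?_ (hM.mono (filter_subset _ M)) _ _ (fun a ha => ?_) (by omega)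
      · exact filter_ssubset.2 ⟨a₀, ha₀, not_not.2 ha₀lt⟩
      obtain ⟨haM, ha₁⟩ := mem_filter.1 ha
      exact ⟨not_lt.1 ha₁, (hM g hgM a haM).1 (by omega), (hMf a haM).2.2⟩
    have hsplit : (M.card : ℝ) = G.card + R.card := by
      exact_mod_cast (card_filter_add_card_filter_not _).symm
    have : (p₀ : ℝ) + q₀ ≤ a₀.1 + a₀.2 := by exact_mod_cast Nat.add_le_add hp₀ hq₀
    nlinarith

theorem card_le_of_fst_ne_snd (hf : IsSyncOnWindows ε n f) (hε : 0 ≤ ε)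
    {M : Finset (ℕ × ℕ)} (hM : IsMonotoneMatching M)
    (hMf : ∀ a ∈ M, a.1 ≠ a.2 ∧ a.1 < n ∧ a.2 < n ∧ f a.1 = f a.2) :
    (M.card : ℝ) ≤ 2 * ε * n := by
  set M₁ := M.filter fun a => a.1 < a.2
  set M₂ := M.filter fun a => ¬ a.1 < a.2
  have h₁ : (M₁.card : ℝ) ≤ ε * n := by
    have := hf.card_le_of_fst_lt_snd hε M₁ (hM.mono (filter_subset _ M)) 0 0 (fun a ha => ?_)
      (Nat.zero_le _)
    · push_cast at this
      linarith
    obtain ⟨haM, hlt⟩ := mem_filter.1 ha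
    obtain ⟨-, -, ha₂, hfa⟩ := hMf a haM
    exact ⟨Nat.zero_le _, Nat.zero_le _, hlt, ha₂, hfa⟩
  have h₂ : (M₂.card : ℝ) ≤ ε * n := by
    have := hf.card_le_of_fst_lt_snd hε (M₂.image Prod.swap)
      ((hM.mono (filter_subset _ M)).image_swap) 0 0 (fun a ha => ?_) (Nat.zero_le _)
    · rw [card_image_of_injective _ Prod.swap_injective] at this
      push_cast at this
      linarith
    obtain ⟨b, hb, rfl⟩ := mem_image.1 ha
    obtain ⟨hbM, hnlt⟩ := mem_filter.1 hb
    obtain ⟨hne, hb₁, -, hfb⟩ := hMf b hbM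
    exact ⟨Nat.zero_le _, Nat.zero_le _, lt_of_le_of_ne (not_lt.1 hnlt) hne.symm, hb₁, hfb.symm⟩
  have hsplit : (M.card : ℝ) = M₁.card + M₂.card := by
    exact_mod_cast (card_filter_add_card_filter_not _).symm
  linarith

end IsSyncOnWindows

end Windows

namespace IsMonotoneMatching

variable {M : Finset (ℕ × ℕ)}

theorem div_eq_div_of_add_eq (hM : IsMonotoneMatching M) {m : ℕ} {a b : ℕ × ℕ} (ha : a ∈ M)
    (hb : b ∈ M) (h : a.1 / m + a.2 / m = b.1 / m + b.2 / m) :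
    a.1 / m = b.1 / m ∧ a.2 / m = b.2 / m := by
  rcases le_total a.1 b.1 with hab | hab
  · have h₁ := Nat.div_le_div_right (c := m) hab
    have h₂ := Nat.div_le_div_right (c := m) (hM.snd_le_snd ha hb hab)
    omega
  · have h₁ := Nat.div_le_div_right (c := m) hab
    have h₂ := Nat.div_le_div_right (c := m) (hM.snd_le_snd hb ha hab)
    omega

theorem card_le_mul_card_image (hM : IsMonotoneMatching M) (m : ℕ) (B : ℝ)
    (hB : ∀ u v : ℕ, ((M.filter fun a => a.1 / m = u ∧ a.2 / m = v).card : ℝ) ≤ B) :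
    (M.card : ℝ) ≤ B * (M.image fun a => a.1 / m + a.2 / m).card := by
  rw [card_eq_sum_card_image (fun a => a.1 / m + a.2 / m) M, Nat.cast_sum, mul_comm,
    ← nsmul_eq_mul]
  refine sum_le_card_nsmul _ _ _ fun s _ => ?_
  rcases (M.filter fun a => a.1 / m + a.2 / m = s).eq_empty_or_nonempty with h | ⟨a, ha⟩
  · simpa [h] using (Nat.cast_nonneg (α := ℝ) _).trans (hB 0 0)
  obtain ⟨haM, rfl⟩ := mem_filter.1 ha
  refine le_trans (Nat.cast_le.2 (card_le_card fun b hb => ?_)) (hB (a.1 / m) (a.2 / m))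
  obtain ⟨hbM, hbs⟩ := mem_filter.1 hb
  exact mem_filter.2 ⟨hbM, hM.div_eq_div_of_add_eq hbM haM hbs⟩

end IsMonotoneMatching

theorem mul_card_image_div_add_div_le {M : Finset (ℕ × ℕ)} {m x y x' y' : ℕ} (hm : 0 < m)
    (hMx : ∀ a ∈ M, x ≤ a.1 ∧ a.1 < y ∧ x' ≤ a.2 ∧ a.2 < y') :
    m * (M.image fun a => a.1 / m + a.2 / m).card ≤ (y - x) + (y' - x') + 3 * m := by
  rcases M.eq_empty_or_nonempty with rfl | ⟨a, ha⟩
  · simp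
  have hsub : (M.image fun a => a.1 / m + a.2 / m) ⊆
      Icc (x / m + x' / m) ((y - 1) / m + (y' - 1) / m) := by
    intro s hs
    obtain ⟨b, hb, rfl⟩ := mem_image.1 hs
    obtain ⟨h₁, h₂, h₃, h₄⟩ := hMx b hb
    exact mem_Icc.2 ⟨Nat.add_le_add (Nat.div_le_div_right h₁) (Nat.div_le_div_right h₃),
      Nat.add_le_add (Nat.div_le_div_right (by omega)) (Nat.div_le_div_right (by omega))⟩
  have hcard := (card_le_card hsub).trans_eq (Nat.card_Icc _ _)
  obtain ⟨h₁, h₂, h₃, h₄⟩ := hMx a ha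
  have e₁ := Nat.lt_mul_div_succ x hm
  have e₂ := Nat.lt_mul_div_succ x' hm
  have e₃ := Nat.mul_div_le (y - 1) m
  have e₄ := Nat.mul_div_le (y' - 1) m
  have hmul := Nat.mul_le_mul_left m hcard
  rw [Nat.mul_sub, Nat.mul_add, Nat.mul_add, Nat.mul_add, Nat.mul_one] at hmul
  rw [Nat.mul_add, Nat.mul_one] at e₁ e₂
  omega

theorem Nat.lt_iff_mod_lt_mod_of_div_eq {a b m : ℕ} (h : a / m = b / m) :
    a < b ↔ a % m < b % m := by
  have ha := Nat.div_add_mod a m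
  have hb := Nat.div_add_mod b m
  rw [h] at ha
  omega

theorem IsMonotoneMatching.image_mod {M : Finset (ℕ × ℕ)} (hM : IsMonotoneMatching M) {m : ℕ}
    (hblock : ∀ a ∈ M, ∀ b ∈ M, a.1 / m = b.1 / m ∧ a.2 / m = b.2 / m) :
    IsMonotoneMatching (M.image fun a => (a.1 % m, a.2 % m)) ∧
      (M.image fun a => (a.1 % m, a.2 % m)).card = M.card := by
  refine ⟨?_, card_image_of_injOn fun a ha b hb hab => hM.eq_of_fst_eq ha hb ?_⟩
  · simp only [IsMonotoneMatching, mem_image]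
    rintro _ ⟨a, ha, rfl⟩ _ ⟨b, hb, rfl⟩
    obtain ⟨h₁, h₂⟩ := hblock a ha b hb
    rw [← Nat.lt_iff_mod_lt_mod_of_div_eq h₁, ← Nat.lt_iff_mod_lt_mod_of_div_eq h₂]
    exact hM a ha b hb
  · have ea := Nat.div_add_mod a.1 m
    have eb := Nat.div_add_mod b.1 m
    rw [(hblock a ha b hb).1, (Prod.mk.inj hab).1] at ea
    omega

theorem card_filter_eq_add_hammingDist {ι β : Type*} [Fintype ι] [DecidableEq β] (x y : ι → β) :
    (univ.filter fun i => x i = y i).card + hammingDist x y = Fintype.card ι :=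
  card_filter_add_card_filter_not _

section CyclicConcat

variable {Sh Ssc : Type*} {m N : ℕ} [NeZero m] [NeZero N]

theorem Fin.ofNat_mod (q : ℕ) : Fin.ofNat m (q % m) = Fin.ofNat m q :=
  Fin.ext (by simp)

def cyclicConcat (w : Fin N → Fin m → Sh) (sc : Fin m → Ssc) (q : ℕ) : Sh × Ssc :=
  (w (Fin.ofNat N (q / m)) (Fin.ofNat m q), sc (Fin.ofNat m q))

theorem flatten_ofFn_eq_ofFn_cyclicConcat (w : Fin N → Fin m → Sh) (sc : Fin m → Ssc) :
    (List.ofFn fun k : Fin N => List.ofFn fun i : Fin m => (w k i, sc i)).flatten =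
      List.ofFn fun q : Fin (N * m) => cyclicConcat w sc q := by
  rw [List.ofFn_mul]
  congr 1
  congr 1
  funext k
  congr 1
  funext i
  have hdiv : (k * m + i : ℕ) / m = k := by
    rw [Nat.add_comm, Nat.add_mul_div_right _ _ (NeZero.pos m), Nat.div_eq_of_lt i.isLt,
      Nat.zero_add]
  have hmod : Fin.ofNat m (k * m + i : ℕ) = i := by
    ext
    simp [Nat.add_comm, Nat.add_mul_mod_self_right, Nat.mod_eq_of_lt i.isLt]
  simp only [cyclicConcat, hdiv, hmod, Fin.ofNat_val_eq_self]

theorem cyclicConcat_mod (w : Fin N → Fin m → Sh) (sc : Fin m → Ssc) (q : ℕ) :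
    cyclicConcat w sc (q % (N * m)) = cyclicConcat w sc q := by
  have h₁ : Fin.ofNat m (q % (N * m)) = Fin.ofNat m q := by
    ext
    simp [Nat.mod_mod_of_dvd q (dvd_mul_left m N)]
  have h₂ : Fin.ofNat N (q % (N * m) / m) = Fin.ofNat N (q / m) := by
    ext
    simp [Nat.mul_comm N m, Nat.mod_mul_right_div_self]
  simp only [cyclicConcat, h₁, h₂]

theorem isSyncCircle_iff_isSyncOnWindows_cyclicConcat {ε : ℝ} (w : Fin N → Fin m → Sh)
    (sc : Fin m → Ssc) :
    IsSyncCircle ε (List.ofFn fun k : Fin N => List.ofFn fun i : Fin m => (w k i, sc i)).flatten ↔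
      IsSyncOnWindows ε (N * m) (cyclicConcat w sc) := by
  rw [flatten_ofFn_eq_ofFn_cyclicConcat]
  have hper (q : ℕ) : cyclicConcat w sc (q % (List.ofFn fun q : Fin (N * m) =>
      cyclicConcat w sc q).length) = cyclicConcat w sc q := by
    rw [List.length_ofFn, cyclicConcat_mod]
  simpa using isSyncCircle_iff_isSyncOnWindows (ε := ε) (by simp) hper

theorem isSyncOnWindows_of_isSyncCircle {ε : ℝ} {sc : Fin m → Ssc}
    (hsc : IsSyncCircle ε (List.ofFn sc)) : IsSyncOnWindows ε m fun q => sc (Fin.ofNat m q) := by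
  have hf (q : ℕ) (hq : q < (List.ofFn sc).length) :
      (List.ofFn sc)[q] = sc (Fin.ofNat m q) := by
    rw [List.getElem_ofFn]
    congr 1
    ext
    simp [Nat.mod_eq_of_lt (List.length_ofFn (f := sc) ▸ hq)]
  have hper (q : ℕ) : sc (Fin.ofNat m (q % (List.ofFn sc).length)) = sc (Fin.ofNat m q) := by
    rw [List.length_ofFn, Fin.ofNat_mod]
  simpa using (isSyncCircle_iff_isSyncOnWindows hf hper).1 hsc

theorem Fin.ofNat_ne_ofNat_of_lt_of_sub_lt {u v : ℕ} (huv : u < v) (hvu : v - u < N) :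
    Fin.ofNat N u ≠ Fin.ofNat N v := by
  intro h
  have hdvd : N ∣ v - u := (Nat.modEq_iff_dvd' huv.le).1 (congrArg Fin.val h)
  exact absurd (Nat.le_of_dvd (Nat.sub_pos_of_lt huv) hdvd) (not_le.2 hvu)

variable {w : Fin N → Fin m → Sh} {sc : Fin m → Ssc} {M : Finset (ℕ × ℕ)} {u v : ℕ}

theorem IsMonotoneMatching.card_le_of_mod_eq [DecidableEq Sh] {δ : ℝ} (hδ : δ ≤ 1)
    (hw : ∀ k k', k ≠ k' → δ * m ≤ hammingDist (w k) (w k')) (hM : IsMonotoneMatching M)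
    (hMf : ∀ a ∈ M, a.1 < a.2 ∧ a.2 < a.1 + N * m ∧ cyclicConcat w sc a.1 = cyclicConcat w sc a.2 ∧
      a.1 / m = u ∧ a.2 / m = v ∧ a.1 % m = a.2 % m) :
    (M.card : ℝ) ≤ (1 - δ) * m := by
  rcases M.eq_empty_or_nonempty with rfl | ⟨a, ha⟩
  · simpa using mul_nonneg (sub_nonneg.2 hδ) (Nat.cast_nonneg m)
  have huv : Fin.ofNat N u ≠ Fin.ofNat N v := by
    obtain ⟨h₁, h₂, -, rfl, rfl, h₃⟩ := hMf a ha
    have e₁ := Nat.div_add_mod a.1 m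
    have e₂ := Nat.div_add_mod a.2 m
    have hlt : a.1 / m < a.2 / m := Nat.lt_of_mul_lt_mul_left (a := m) (by omega)
    refine Fin.ofNat_ne_ofNat_of_lt_of_sub_lt hlt (Nat.lt_of_mul_lt_mul_left (a := m) ?_)
    rw [Nat.mul_sub, Nat.mul_comm m N]
    omega
  set agree := univ.filter fun i => w (Fin.ofNat N u) i = w (Fin.ofNat N v) i
  have hagree := card_filter_eq_add_hammingDist (w (Fin.ofNat N u)) (w (Fin.ofNat N v))
  rw [Fintype.card_fin] at hagree
  have hcard : M.card ≤ agree.card := by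
    refine card_le_card_of_injOn (fun a => Fin.ofNat m a.1) (fun b hb => ?_) fun b hb c hc hbc => ?_
    · obtain ⟨-, -, hfb, rfl, rfl, hmod⟩ := hMf b hb
      have hb₂ : Fin.ofNat m b.2 = Fin.ofNat m b.1 := Fin.ext (by simp [hmod])
      have := congrArg Prod.fst hfb
      simp only [cyclicConcat, hb₂] at this
      exact mem_filter.2 ⟨mem_univ _, this⟩
    · refine hM.eq_of_fst_eq hb hc ?_
      have hdiv : b.1 / m = c.1 / m := (hMf b hb).2.2.2.1.trans (hMf c hc).2.2.2.1.symm
      have hmod : b.1 % m = c.1 % m := by simpa using congrArg Fin.val hbc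
      rw [← Nat.div_add_mod b.1 m, ← Nat.div_add_mod c.1 m, hdiv, hmod]
  have := hw _ _ huv
  have : (agree.card : ℝ) + hammingDist (w (Fin.ofNat N u)) (w (Fin.ofNat N v)) = m := by
    exact_mod_cast hagree
  have : (M.card : ℝ) ≤ agree.card := by exact_mod_cast hcard
  nlinarith

theorem IsMonotoneMatching.card_le_of_mod_ne {ε : ℝ}
    (hsc : IsSyncOnWindows ε m fun q => sc (Fin.ofNat m q)) (hε : 0 ≤ ε) (hM : IsMonotoneMatching M)
    (hMf : ∀ a ∈ M, cyclicConcat w sc a.1 = cyclicConcat w sc a.2 ∧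
      a.1 / m = u ∧ a.2 / m = v ∧ a.1 % m ≠ a.2 % m) :
    (M.card : ℝ) ≤ 2 * ε * m := by
  obtain ⟨hM', hcard⟩ := hM.image_mod fun a ha b hb =>
    ⟨(hMf a ha).2.1.trans (hMf b hb).2.1.symm, (hMf a ha).2.2.1.trans (hMf b hb).2.2.1.symm⟩
  rw [← hcard]
  refine hsc.card_le_of_fst_ne_snd hε hM' fun b hb => ?_
  obtain ⟨a, ha, rfl⟩ := mem_image.1 hb
  obtain ⟨hfa, -, -, hne⟩ := hMf a ha
  have hsnd := congrArg Prod.snd hfa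
  simp only [cyclicConcat] at hsnd
  refine ⟨hne, Nat.mod_lt _ (NeZero.pos m), Nat.mod_lt _ (NeZero.pos m), ?_⟩
  simpa only [Fin.ofNat_mod] using hsnd

theorem IsMonotoneMatching.card_filter_div_eq_le [DecidableEq Sh] {ε δ : ℝ} (hδ : δ ≤ 1)
    (hw : ∀ k k', k ≠ k' → δ * m ≤ hammingDist (w k) (w k'))
    (hsc : IsSyncOnWindows ε m fun q => sc (Fin.ofNat m q)) (hε : 0 ≤ ε)
    (hM : IsMonotoneMatching M)
    (hMf : ∀ a ∈ M, a.1 < a.2 ∧ a.2 < a.1 + N * m ∧ cyclicConcat w sc a.1 = cyclicConcat w sc a.2)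
    (u v : ℕ) :
    ((M.filter fun a => a.1 / m = u ∧ a.2 / m = v).card : ℝ) ≤ (1 - δ) * m + 2 * ε * m := by
  set B := M.filter fun a => a.1 / m = u ∧ a.2 / m = v
  have hB : IsMonotoneMatching B := hM.mono (filter_subset _ M)
  have hsplit : (B.card : ℝ) = (B.filter fun a => a.1 % m = a.2 % m).card +
      (B.filter fun a => ¬ a.1 % m = a.2 % m).card := by
    exact_mod_cast (card_filter_add_card_filter_not (s := B) fun a => a.1 % m = a.2 % m).symm
  have haligned := (hB.mono (filter_subset (fun a => a.1 % m = a.2 % m) B)).card_le_of_mod_eq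
    (u := u) (v := v) hδ hw fun a ha => by
      obtain ⟨haB, hmod⟩ := mem_filter.1 ha
      obtain ⟨haM, hu, hv⟩ := mem_filter.1 haB
      exact ⟨(hMf a haM).1, (hMf a haM).2.1, (hMf a haM).2.2, hu, hv, hmod⟩
  have hunaligned := (hB.mono (filter_subset (fun a => ¬ a.1 % m = a.2 % m) B)).card_le_of_mod_ne
    (u := u) (v := v) hsc hε fun a ha => by
      obtain ⟨haB, hmod⟩ := mem_filter.1 ha
      obtain ⟨haM, hu, hv⟩ := mem_filter.1 haB
      exact ⟨(hMf a haM).2.2, hu, hv, hmod⟩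
  linarith

theorem lcsLen_islice_cyclicConcat_le [DecidableEq Sh] {ε δ : ℝ} (hδ : δ ≤ 1)
    (hw : ∀ k k', k ≠ k' → δ * m ≤ hammingDist (w k) (w k'))
    (hsc : IsSyncOnWindows ε m fun q => sc (Fin.ofNat m q)) (hε : 0 ≤ ε)
    {x y z : ℕ} (hxy : x < y) (hyz : y < z) (hzx : z ≤ x + N * m) :
    (lcsLen (islice (cyclicConcat w sc) x y) (islice (cyclicConcat w sc) y z) : ℝ) ≤
      ((1 - δ) + 2 * ε) * ((z : ℝ) - x + 3 * m) := by
  obtain ⟨M, hM, hMf, hcard⟩ :=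
    exists_monotoneMatching_card_eq_lcsLen (cyclicConcat w sc) (cyclicConcat w sc) x y y z
  have hblocks := hM.card_le_mul_card_image m _ <| hM.card_filter_div_eq_le hδ hw hsc hε
    fun a ha => by obtain ⟨h₁, h₂, h₃, h₄, h₅⟩ := hMf a ha; exact ⟨by omega, by omega, h₅⟩
  have hdiag := mul_card_image_div_add_div_le (NeZero.pos m)
    fun a ha => by obtain ⟨h₁, h₂, h₃, h₄, -⟩ := hMf a ha; exact ⟨h₁, h₂, h₃, h₄⟩
  have hdiag' : (m : ℝ) * (M.image fun a => a.1 / m + a.2 / m).card ≤ (z : ℝ) - x + 3 * m := by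
    have := (Nat.cast_le (α := ℝ)).2 hdiag
    push_cast [Nat.cast_sub hxy.le, Nat.cast_sub hyz.le] at this
    linarith
  have hβ : 0 ≤ (1 - δ) + 2 * ε := by linarith
  rw [← hcard]
  calc (M.card : ℝ) ≤ ((1 - δ) + 2 * ε) * (m * (M.image fun a => a.1 / m + a.2 / m).card) := by
        linarith
    _ ≤ _ := mul_le_mul_of_nonneg_left hdiag' hβ

theorem lcsLen_islice_cyclicConcat_lt {ε : ℝ}
    (hsc : IsSyncOnWindows ε m fun q => sc (Fin.ofNat m q))
    {x y z : ℕ} (hxy : x < y) (hyz : y < z) (hzx : z ≤ x + m) :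
    (lcsLen (islice (cyclicConcat w sc) x y) (islice (cyclicConcat w sc) y z) : ℝ) <
      ε / 2 * ((z : ℝ) - x) := by
  have hsnd := lcsLen_le_lcsLen_map Prod.snd (islice (cyclicConcat w sc) x y)
    (islice (cyclicConcat w sc) y z)
  rw [map_islice, map_islice] at hsnd
  exact lt_of_le_of_lt (Nat.cast_le.2 hsnd) (hsc.lcsLen_lt hxy hyz hzx)

end CyclicConcat

theorem le_one_sub_mul_div {ε δ : ℝ} (hε : 0 ≤ ε) (hε1 : ε ≤ 1) (hδ : δ ≤ 1) :
    ε ≤ 1 - δ * (1 - ε) / (1 + ε) := by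
  rw [le_sub_comm, div_le_iff₀ (by linarith)]
  nlinarith

theorem four_mul_le_five_mul {ε δ : ℝ} (hε : 0 ≤ ε) (hε1 : ε < 1) (hδ : δ ≤ 1)
    (h : 1 - δ * (1 - ε) / (1 + ε) ≤ 1 / 10) :
    4 * ((1 - δ) + 2 * ε) ≤ 5 * (1 - δ * (1 - ε) / (1 + ε)) := by
  have hpos : 0 < 1 + ε := by linarith
  have hc : 1 - δ * (1 - ε) / (1 + ε) = ((1 - δ) * (1 - ε) + 2 * ε) / (1 + ε) := by
    field_simp
    ring
  rw [hc, div_le_iff₀ hpos] at h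
  rw [hc, mul_div_assoc', le_div_iff₀ hpos]
  nlinarith [mul_nonneg (sub_nonneg.2 hδ) (sub_nonneg.2 hε1.le)]

theorem lcsLen_islice_cyclicConcat_lt_five_mul {Sh Ssc : Type*} [DecidableEq Sh] {m N : ℕ}
    [NeZero m] [NeZero N] {ε δ : ℝ} (hε : 0 < ε) (hε1 : ε < 1) (hδ : δ < 1)
    {w : Fin N → Fin m → Sh} (hw : ∀ k k', k ≠ k' → δ * m ≤ hammingDist (w k) (w k'))
    {sc : Fin m → Ssc} (hsc : IsSyncOnWindows ε m fun q => sc (Fin.ofNat m q))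
    {x y z : ℕ} (hxy : x < y) (hyz : y < z) (hzx : z ≤ x + N * m) :
    (lcsLen (islice (cyclicConcat w sc) x y) (islice (cyclicConcat w sc) y z) : ℝ) <
      5 * (1 - δ * (1 - ε) / (1 + ε)) * ((z : ℝ) - x) := by
  set c := 1 - δ * (1 - ε) / (1 + ε)
  have hL : (x : ℝ) + 2 ≤ z := by exact_mod_cast (by omega : x + 2 ≤ z)
  by_cases hc : 1 / 10 < c
  · have h := two_mul_lcsLen_le (islice (cyclicConcat w sc) x y) (islice (cyclicConcat w sc) y z)
    rw [length_islice, length_islice] at h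
    have h' := (Nat.cast_le (α := ℝ)).2 h
    push_cast [Nat.cast_sub hxy.le, Nat.cast_sub hyz.le] at h'
    nlinarith
  by_cases hshort : z ≤ x + m
  · have hlt := lcsLen_islice_cyclicConcat_lt (w := w) hsc hxy hyz hshort
    have hεc := le_one_sub_mul_div hε.le hε1.le hδ.le
    nlinarith
  · have hlong := lcsLen_islice_cyclicConcat_le hδ.le hw hsc hε.le hxy hyz hzx
    have hnum := four_mul_le_five_mul hε.le hε1 hδ.le (not_lt.1 hc)
    have hmL : (x : ℝ) + m < z := by exact_mod_cast (by omega : x + m < z)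
    have hβ : 0 < (1 - δ) + 2 * ε := by linarith
    nlinarith

theorem concat_code_isSyncCircle_general {Sh Ssc : Type*} [DecidableEq Sh]
    (m N : ℕ) (ε₀ δ : ℝ)
    (hε₀ : 0 < ε₀) (hε₀1 : ε₀ < 1) (hδ1 : δ < 1)
    (Chat : Set (Fin m → Sh))
    (hdist : ∀ c₁ ∈ Chat, ∀ c₂ ∈ Chat, c₁ ≠ c₂ → δ * (m : ℝ) ≤ (hammingDist c₁ c₂ : ℝ))
    (sc : Fin m → Ssc) (hsc : IsSyncCircle ε₀ (List.ofFn sc))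
    (w : Fin N → (Fin m → Sh)) (hw : ∀ k, w k ∈ Chat) (hinj : Function.Injective w) :
    IsSyncCircle (10 * (1 - δ * (1 - ε₀) / (1 + ε₀)))
      (List.ofFn fun k : Fin N =>
        List.ofFn fun i : Fin m => (w k i, sc i)).flatten := by
  rcases Nat.eq_zero_or_pos m with rfl | hm
  · intro i hi hin
    simp at hin
    omega
  rcases Nat.eq_zero_or_pos N with rfl | hN
  · intro i hi hin
    simp at hin
    omega
  have : NeZero m := ⟨hm.ne'⟩
  have : NeZero N := ⟨hN.ne'⟩
  rw [isSyncCircle_iff_isSyncOnWindows_cyclicConcat]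
  intro x y z hxy hyz hzx
  have hlcs := lcsLen_islice_cyclicConcat_lt_five_mul hε₀ hε₀1 hδ1
    (fun k k' h => hdist _ (hw k) _ (hw k') (hinj.ne h)) (isSyncOnWindows_of_isSyncCircle hsc)
    hxy hyz hzx
  rw [cast_editDistance, length_islice, length_islice, Nat.cast_sub hxy.le, Nat.cast_sub hyz.le]
  linarith

/-- Concatenating `N` pairwise distinct codewords of the code
obtained by coordinatewise pairing a distance-`δ·m` code `Ĉ ⊆ Σ̂^m` with an
`ε₀`-synchronization circle of length `m` yields an `ε₁`-synchronization
circle, where `ε₁ = 10·(1 − δ·(1−ε₀)/(1+ε₀))`. -/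
theorem concat_code_isSyncCircle {Sh Ssc : Type*} [DecidableEq Sh]
    (m N : ℕ) (ε₀ δ : ℝ)
    (hε₀ : 0 < ε₀) (hε₀1 : ε₀ < 1) (hδ : 0 < δ) (hδ1 : δ < 1)
    (Chat : Set (Fin m → Sh))
    (hdist : ∀ c₁ ∈ Chat, ∀ c₂ ∈ Chat, c₁ ≠ c₂ → δ * (m : ℝ) ≤ (hammingDist c₁ c₂ : ℝ))
    (sc : Fin m → Ssc) (hsc : IsSyncCircle ε₀ (List.ofFn sc))
    (w : Fin N → (Fin m → Sh)) (hw : ∀ k, w k ∈ Chat) (hinj : Function.Injective w) :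
    IsSyncCircle (10 * (1 - δ * (1 - ε₀) / (1 + ε₀)))
      (List.ofFn fun k : Fin N =>
        List.ofFn fun i : Fin m => (w k i, sc i)).flatten :=
  concat_code_isSyncCircle_general m N ε₀ δ hε₀ hε₀1 hδ1 Chat hdist sc hsc w hw hinj
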